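/- If G and G' are Dijkstra graphs with C(G) = C(G'), then the map f sending each vertex v of G to the vertex v' of G' whose associated 1 occupies the same position in the code string is a graph isomorphism from G to G'. -/

import Mathlib

namespace DJ

/-- A directed graph with vertex set a finite set of naturals, a distinguished
source `src` and a distinguished sink `snk` (a "source-sink" flow graph). -/
structure SSG where
  verts : Finset ℕ
  edges : Finset (ℕ × ℕ)
  src : ℕ
  snk : ℕ
deriving DecidableEq

def Edge (G : SSG) (a b : ℕ) : Prop := (a, b) ∈ G.edges

/-- `a` reaches `b` by a directed path. -/
def Reaches (G : SSG) : ℕ → ℕ → Prop := Relation.ReflTransGen (Edge G)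

/-- The trivial (one-vertex) statement graph. -/
def trivG (x : ℕ) : SSG := ⟨{x}, ∅, x, x⟩
/-- Sequence statement graph. -/
def seqG : SSG := ⟨{0, 1}, {(0, 1)}, 0, 1⟩
/-- If-then statement graph. -/
def ifG : SSG := ⟨{0, 1, 2}, {(0, 1), (1, 2), (0, 2)}, 0, 2⟩
/-- If-then-else statement graph. -/
def iteG : SSG := ⟨{0, 1, 2, 3}, {(0, 1), (0, 2), (1, 3), (2, 3)}, 0, 3⟩
/-- p-case statement graph (meaningful for `3 ≤ p`). -/
def caseG (p : ℕ) : SSG :=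
  ⟨insert 0 (insert (p + 1) ((Finset.range p).image (· + 1))),
   ((Finset.range p).image (fun i => (0, i + 1))) ∪
     ((Finset.range p).image (fun i => (i + 1, p + 1))), 0, p + 1⟩
/-- While statement graph: source 0, body 1, sink 2; sink is out-neighbor of source. -/
def whileG : SSG := ⟨{0, 1, 2}, {(0, 1), (1, 0), (0, 2)}, 0, 2⟩
/-- Repeat statement graph: source 0, body 1, sink 2; sink not out-neighbor of source. -/
def repeatG : SSG := ⟨{0, 1, 2}, {(0, 1), (1, 0), (1, 2)}, 0, 2⟩

/-- `f` is an isomorphism of directed graphs from `G` to `G'`. -/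
def IsIsoFun (f : ℕ → ℕ) (G G' : SSG) : Prop :=
  Set.BijOn f ↑G.verts ↑G'.verts ∧
    ∀ a ∈ G.verts, ∀ b ∈ G.verts, ((a, b) ∈ G.edges ↔ (f a, f b) ∈ G'.edges)

/-- Isomorphism of flow graphs (must map source to source). -/
def FIso (G G' : SSG) : Prop := ∃ f, IsIsoFun f G G' ∧ f G.src = G'.src

/-- Isomorphism of source-sink graphs (must map source to source and sink to sink). -/
def SSIso (G G' : SSG) : Prop :=
  ∃ f, IsIsoFun f G G' ∧ f G.src = G'.src ∧ f G.snk = G'.snk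

/-- `H` is (source-sink isomorphic to) a non-trivial statement graph. -/
def IsNTStmt (H : SSG) : Prop :=
  SSIso H seqG ∨ SSIso H ifG ∨ SSIso H iteG ∨
    (∃ p, 3 ≤ p ∧ SSIso H (caseG p)) ∨ SSIso H whileG ∨ SSIso H repeatG

/-- `H` is a statement graph (trivial or non-trivial). -/
def IsStmt (H : SSG) : Prop := (∃ x, SSIso H (trivG x)) ∨ IsNTStmt H

/-- Expansion of vertex `v` of `G` into the source-sink graph `H`:
in-neighbors of `v` become in-neighbors of `s(H)`, out-neighbors of `v` become
out-neighbors of `t(H)`; other adjacencies unchanged. -/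
def expand (G : SSG) (v : ℕ) (H : SSG) : SSG where
  verts := (G.verts \ {v}) ∪ H.verts
  edges :=
    (G.edges.filter (fun e => e.1 ≠ v ∧ e.2 ≠ v)) ∪ H.edges ∪
      ((G.edges.filter (fun e => e.2 = v ∧ e.1 ≠ v)).image (fun e => (e.1, H.src))) ∪
      ((G.edges.filter (fun e => e.1 = v ∧ e.2 ≠ v)).image (fun e => (H.snk, e.2)))
  src := if v = G.src then H.src else G.src
  snk := if v = G.snk then H.snk else G.snk

/-- Dijkstra graphs with their set `X` of expansible (X-labeled) vertices:
built from the trivial graph by expanding X-vertices into non-trivial statement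
graphs; after an expansion the source of the statement graph becomes regular. -/
inductive IsDGX : SSG → Finset ℕ → Prop
  | base (v : ℕ) : IsDGX (trivG v) {v}
  | expand {G : SSG} {X : Finset ℕ} {H : SSG} (v : ℕ) :
      IsDGX G X → v ∈ X → IsNTStmt H → Disjoint G.verts H.verts →
      IsDGX (expand G v H) ((X \ {v}) ∪ (H.verts \ {H.src}))

/-- `G` is a Dijkstra graph. -/
def IsDG (G : SSG) : Prop := ∃ X, IsDGX G X

/-- `d` dominates `u`: every directed path from the source of `G` to `u` passes
through `d`. -/
def Dominates (G : SSG) (d u : ℕ) : Prop :=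
  ∀ l : List ℕ, l.Chain' (Edge G) → l.head? = some G.src → l.getLast? = some u → d ∈ l

/-- A cycle edge (back edge) of a reducible flow graph: an edge whose head
dominates its tail. -/
def CycleEdge (G : SSG) (a b : ℕ) : Prop := (a, b) ∈ G.edges ∧ Dominates G b a

/-- `l` is (the vertex list of) a directed cycle of `G`. -/
def IsCycle (G : SSG) (l : List ℕ) : Prop :=
  l ≠ [] ∧ l.Chain' (Edge G) ∧
    ∃ a b, l.head? = some a ∧ l.getLast? = some b ∧ (b, a) ∈ G.edges

/-- `G` is reducible: every cycle is single-entry, i.e. contains a vertex `v`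
such that every path from the source to another vertex of the cycle passes
through `v`. -/
def Reducible (G : SSG) : Prop :=
  ∀ l, IsCycle G l → ∃ v ∈ l, ∀ u ∈ l, u ≠ v → Dominates G v u

/-- `H` is an induced subgraph of `G`. -/
def IsInduced (H G : SSG) : Prop :=
  H.verts ⊆ G.verts ∧ H.edges = G.edges.filter (fun e => e.1 ∈ H.verts ∧ e.2 ∈ H.verts)

/-- `H` is closed in `G`. -/
def Closed (H G : SSG) : Prop :=
  (∀ x ∈ H.verts, x ≠ H.src → ∀ u, (u, x) ∈ G.edges → u ∈ H.verts) ∧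
  (∀ x ∈ H.verts, x ≠ H.snk → ∀ w, (x, w) ∈ G.edges → w ∈ H.verts) ∧
  (∀ u, CycleEdge G u H.src → (H.src, u) ∈ G.edges)

/-- `H` is a non-trivial prime subgraph of `G`. -/
def IsPrime (H G : SSG) : Prop := IsInduced H G ∧ IsNTStmt H ∧ Closed H G

/-- Image of a vertex under contraction of `H` into its source. -/
def imgV (H : SSG) (x : ℕ) : ℕ := if x ∈ H.verts then H.src else x

/-- Contraction `G↓H`: coalesce `V(H)` into `s(H)`, removing loops and
parallel edges. -/
def contract (G H : SSG) : SSG where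
  verts := (G.verts \ H.verts) ∪ {H.src}
  edges := (G.edges.image (fun e => (imgV H e.1, imgV H e.2))).filter (fun e => e.1 ≠ e.2)
  src := imgV H G.src
  snk := imgV H G.snk

/-- Subgraph of `G` induced on `S`, with prescribed source and sink. -/
def inducedOn (G : SSG) (S : Finset ℕ) (s t : ℕ) : SSG :=
  ⟨S, G.edges.filter (fun e => e.1 ∈ S ∧ e.2 ∈ S), s, t⟩

/-- Image `I_{G↓H}(H')` of the subgraph `H'` in the contracted graph `G↓H`. -/
def imgSub (G H H' : SSG) : SSG :=
  inducedOn (contract G H) (H'.verts.image (imgV H)) (imgV H H'.src) (imgV H H'.snk)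

/-- `Gs 0, …, Gs k` is a contractile sequence of `G`. -/
def ContrSeq (G : SSG) (Gs : ℕ → SSG) (k : ℕ) : Prop :=
  FIso G (Gs 0) ∧
    ∀ i < k, ∃ H, IsPrime H (Gs i) ∧ FIso (Gs (i + 1)) (contract (Gs i) H)

/-- The contractile sequence ending at index `k` is maximal. -/
def MaximalSeq (Gs : ℕ → SSG) (k : ℕ) : Prop := ¬ ∃ H, IsPrime H (Gs k)

/-- Reachability avoiding cycle edges (descendant relation in `G` minus its
cycle edges). -/
def NCReach (G : SSG) : ℕ → ℕ → Prop :=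
  Relation.ReflTransGen (fun a b => (a, b) ∈ G.edges ∧ ¬ CycleEdge G a b)

end DJ
namespace DJ

/-- Lexicographic comparison of integer strings. -/
def lexLe : List ℕ → List ℕ → Bool
  | [], _ => true
  | _ :: _, [] => false
  | a :: as, b :: bs => if a < b then true else if b < a then false else lexLe as bs

/-- Parse trees of structured programs, with vertex names: each constructor
corresponds to a statement graph whose expansible positions carry subprograms. -/
inductive Prog where
  | leaf (v : ℕ)
  | seq (v : ℕ) (b : Prog)
  | ifThen (v : ℕ) (a t : Prog)
  | ite (v : ℕ) (a b t : Prog)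
  | pcase (v : ℕ) (bs : List Prog) (t : Prog)
  | whileP (v : ℕ) (a t : Prog)
  | repeatP (v : ℕ) (a t : Prog)

/-- The code `C` of a structured program, as in the isomorphism algorithm. -/
def code : Prog → List ℕ
  | .leaf _ => [1]
  | .seq _ b => 1 :: 2 :: code b
  | .ifThen _ a t => 1 :: 3 :: (code a ++ code t)
  | .ite _ a b t =>
      1 :: 6 :: ((if lexLe (code a) (code b) then code a ++ code b
                  else code b ++ code a) ++ code t)
  | .pcase _ bs t =>
      1 :: (bs.length + 4) ::
        ((((bs.attach.map (fun p => code p.1)).mergeSort (fun x y => lexLe x y)).flatten)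
          ++ code t)
  | .whileP _ a t => 1 :: 4 :: (code a ++ code t)
  | .repeatP _ a t => 1 :: 5 :: (code a ++ code t)
  termination_by P => sizeOf P
  decreasing_by all_goals
    first
      | (have := List.sizeOf_lt_of_mem p.2; simp +arith +decide at this ⊢; omega)
      | (simp +arith +decide)
      | (simp +arith +decide; omega)


/-- The vertices of a program in code order: the i-th vertex corresponds to the
i-th symbol `1` of the code. -/
def vlist : Prog → List ℕ
  | .leaf v => [v]
  | .seq v b => v :: vlist b
  | .ifThen v a t => v :: (vlist a ++ vlist t)
  | .ite v a b t =>
      v :: ((if lexLe (code a) (code b) then vlist a ++ vlist b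
             else vlist b ++ vlist a) ++ vlist t)
  | .pcase v bs t =>
      v :: ((((bs.attach.map (fun p => (code p.1, vlist p.1))).mergeSort
                (fun x y => lexLe x.1 y.1)).flatMap Prod.snd) ++ vlist t)
  | .whileP v a t => v :: (vlist a ++ vlist t)
  | .repeatP v a t => v :: (vlist a ++ vlist t)
  termination_by P => sizeOf P
  decreasing_by all_goals
    first
      | (have := List.sizeOf_lt_of_mem p.2; simp +arith +decide at this ⊢; omega)
      | (simp +arith +decide)
      | (simp +arith +decide; omega)


/-- Number of prime contractions needed to reduce the program's graph to a
trivial vertex (= number of non-leaf nodes of the parse tree). -/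
def contractions : Prog → ℕ
  | .leaf _ => 0
  | .seq _ b => 1 + contractions b
  | .ifThen _ a t => 1 + contractions a + contractions t
  | .ite _ a b t => 1 + contractions a + contractions b + contractions t
  | .pcase _ bs t => 1 + (bs.attach.map (fun p => contractions p.1)).sum + contractions t
  | .whileP _ a t => 1 + contractions a + contractions t
  | .repeatP _ a t => 1 + contractions a + contractions t
  termination_by P => sizeOf P
  decreasing_by all_goals
    first
      | (have := List.sizeOf_lt_of_mem p.2; simp +arith +decide at this ⊢; omega)
      | (simp +arith +decide)
      | (simp +arith +decide; omega)


/-- The Dijkstra graph represented by a structured program. -/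
def graphOf : Prog → SSG
  | .leaf v => trivG v
  | .seq v b =>
      let B := graphOf b
      ⟨insert v B.verts, insert (v, B.src) B.edges, v, B.snk⟩
  | .ifThen v a t =>
      let A := graphOf a; let T := graphOf t
      ⟨insert v (A.verts ∪ T.verts),
       ({(v, A.src), (A.snk, T.src), (v, T.src)} : Finset (ℕ × ℕ)) ∪ A.edges ∪ T.edges,
       v, T.snk⟩
  | .ite v a b t =>
      let A := graphOf a; let B := graphOf b; let T := graphOf t
      ⟨insert v (A.verts ∪ B.verts ∪ T.verts),
       ({(v, A.src), (v, B.src), (A.snk, T.src), (B.snk, T.src)} : Finset (ℕ × ℕ)) ∪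
         A.edges ∪ B.edges ∪ T.edges, v, T.snk⟩
  | .pcase v bs t =>
      let T := graphOf t
      ⟨insert v ((bs.attach.map (fun p => (graphOf p.1).verts)).foldr (· ∪ ·) ∅ ∪ T.verts),
       (bs.attach.map (fun p =>
          let A := graphOf p.1
          insert (v, A.src) (insert (A.snk, T.src) A.edges))).foldr (· ∪ ·) ∅ ∪ T.edges,
       v, T.snk⟩
  | .whileP v a t =>
      let A := graphOf a; let T := graphOf t
      ⟨insert v (A.verts ∪ T.verts),
       ({(v, A.src), (A.snk, v), (v, T.src)} : Finset (ℕ × ℕ)) ∪ A.edges ∪ T.edges,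
       v, T.snk⟩
  | .repeatP v a t =>
      let A := graphOf a; let T := graphOf t
      ⟨insert v (A.verts ∪ T.verts),
       ({(v, A.src), (A.snk, v), (A.snk, T.src)} : Finset (ℕ × ℕ)) ∪ A.edges ∪ T.edges,
       v, T.snk⟩
  termination_by P => sizeOf P
  decreasing_by all_goals
    first
      | (have := List.sizeOf_lt_of_mem p.2; simp +arith +decide at this ⊢; omega)
      | (simp +arith +decide)
      | (simp +arith +decide; omega)

/-- Every `pcase` node has at least 3 branches. -/
def arityOK : Prog → Prop
  | .leaf _ => True
  | .seq _ b => arityOK b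
  | .ifThen _ a t => arityOK a ∧ arityOK t
  | .ite _ a b t => arityOK a ∧ arityOK b ∧ arityOK t
  | .pcase _ bs t => 3 ≤ bs.length ∧ (∀ p ∈ bs.attach, arityOK p.1) ∧ arityOK t
  | .whileP _ a t => arityOK a ∧ arityOK t
  | .repeatP _ a t => arityOK a ∧ arityOK t
  termination_by P => sizeOf P
  decreasing_by all_goals
    first
      | (have := List.sizeOf_lt_of_mem p.2; simp +arith +decide at this ⊢; omega)
      | (simp +arith +decide)
      | (simp +arith +decide; omega)

/-- Well-formed program: all vertex names distinct, correct `pcase` arities. -/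
def WF (P : Prog) : Prop := (vlist P).Nodup ∧ arityOK P

/-- The directed path on `n` vertices `0 → 1 → ⋯ → n-1`. -/
def pathG (n : ℕ) : SSG :=
  ⟨Finset.range n, (Finset.range (n - 1)).image (fun i => (i, i + 1)), 0, n - 1⟩

end DJ

/-!
A code is the header `[1]` (a leaf) or `[1, k]` with a type symbol `k ≥ 2`, followed by the codes
of the children in a canonical order (the branches of `ite` and `pcase` sorted by `lexLe`, the
continuation last). A code inside a longer code is followed by nothing or by another code, which
starts with a vertex symbol `1`; hence codes are uniquely decodable, and equal codes have equal
headers and children with pairwise equal codes. The `1`s of a code are exactly its vertices, in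
the order of `vlist`, so any `f` sending `vlist P` entrywise to `vlist P'` maps the graph of each
child onto the graph of the corresponding child, and therefore `graphOf P` onto `graphOf P'`, since
the graph of a node is assembled naturally from its root and the graphs of its children. The
positional map is such an `f`, and the positional map in the other direction inverts it on the
vertices of `graphOf P`.
-/

namespace List

theorem forall₂_append_singleton_iff {α β : Type*} {R : α → β → Prop} {l : List α} {l' : List β}
    {a : α} {b : β} : Forall₂ R (l ++ [a]) (l' ++ [b]) ↔ Forall₂ R l l' ∧ R a b := by
  rw [← forall₂_reverse_iff]
  simp [and_comm]

theorem forall₂_map_eq_of_flatMap {α β : Type*} {g : α → List β} {f : β → β}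
    {l l' : List α} (hlen : Forall₂ (fun a a' => (g a).length = (g a').length) l l')
    (h : (l.flatMap g).map f = l'.flatMap g) :
    Forall₂ (fun a a' => (g a).map f = g a') l l' := by
  induction hlen with
  | nil => exact .nil
  | cons hl _ ih =>
    simp only [flatMap_cons, map_append] at h
    obtain ⟨hhead, htail⟩ := append_inj h (by simpa using hl)
    exact .cons hhead (ih htail)

end List

namespace DJ

namespace Prog

def root : Prog → ℕ
  | .leaf v | .seq v _ | .ifThen v _ _ | .ite v _ _ _ | .pcase v _ _ | .whileP v _ _
  | .repeatP v _ _ => v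

def header : Prog → List ℕ
  | .leaf _ => [1]
  | .seq _ _ => [1, 2]
  | .ifThen _ _ _ => [1, 3]
  | .ite _ _ _ _ => [1, 6]
  | .pcase _ bs _ => [1, bs.length + 4]
  | .whileP _ _ _ => [1, 4]
  | .repeatP _ _ _ => [1, 5]

def sortBranches (bs : List Prog) : List Prog :=
  bs.mergeSort fun x y => lexLe (code x) (code y)

def children : Prog → List Prog
  | .leaf _ => []
  | .seq _ b => [b]
  | .ifThen _ a t | .whileP _ a t | .repeatP _ a t => [a, t]
  | .ite _ a b t => if lexLe (code a) (code b) then [a, b, t] else [b, a, t]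
  | .pcase _ bs t => sortBranches bs ++ [t]

end Prog

open Prog

lemma code_pcase (v : ℕ) (bs : List Prog) (t : Prog) :
    code (.pcase v bs t) = 1 :: (bs.length + 4) :: ((sortBranches bs).flatMap code ++ code t) := by
  rw [code, List.attach_map_val (f := code), List.flatMap, sortBranches,
    List.map_mergeSort (f := code) fun _ _ _ _ => rfl]

lemma vlist_pcase (v : ℕ) (bs : List Prog) (t : Prog) :
    vlist (.pcase v bs t) = v :: ((sortBranches bs).flatMap vlist ++ vlist t) := by
  rw [vlist, List.attach_map_val (f := fun q => (code q, vlist q)), sortBranches,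
    ← List.map_mergeSort (f := fun q => (code q, vlist q)) fun _ _ _ _ => rfl, List.flatMap_map]

lemma code_eq_header_append (P : Prog) : code P = P.header ++ P.children.flatMap code := by
  cases P with
  | ite v a b t => by_cases h : lexLe (code a) (code b) <;> simp [code, header, children, h]
  | pcase v bs t => simp [code_pcase, header, children]
  | _ => simp [code, header, children]

lemma vlist_eq_root_cons (P : Prog) : vlist P = P.root :: P.children.flatMap vlist := by
  cases P with
  | ite v a b t => by_cases h : lexLe (code a) (code b) <;> simp [vlist, root, children, h]
  | pcase v bs t => simp [vlist_pcase, root, children]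
  | _ => simp [vlist, root, children]

lemma sizeOf_lt_of_mem_children {P q : Prog} (hq : q ∈ P.children) : sizeOf q < sizeOf P := by
  cases P with
  | ite v a b t =>
    by_cases h : lexLe (code a) (code b) <;> simp [children, h] at hq <;>
      rcases hq with rfl | rfl | rfl <;> simp +arith
  | pcase v bs t =>
    simp only [children, List.mem_append, List.mem_singleton] at hq
    rcases hq with hq | rfl
    · have := List.sizeOf_lt_of_mem ((List.mergeSort_perm _ _).subset hq)
      simp +arith; omega
    · simp +arith
  | _ => simp [children] at hq <;> rcases hq with rfl | rfl <;> simp +arith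

theorem children_induction {motive : Prog → Prop}
    (ih : ∀ P, (∀ q ∈ P.children, motive q) → motive P) (P : Prog) : motive P :=
  ih P fun q _ => children_induction ih q
termination_by sizeOf P
decreasing_by exact sizeOf_lt_of_mem_children ‹_›

lemma count_one_header (P : Prog) : P.header.count 1 = 1 := by
  cases P <;> simp [header]

lemma length_vlist_eq_count_code (P : Prog) : (vlist P).length = (code P).count 1 := by
  induction P using children_induction with
  | ih P ih =>
    rw [vlist_eq_root_cons, code_eq_header_append, List.length_cons, List.count_append,
      count_one_header, List.length_flatMap, List.count_flatMap, List.map_congr_left ih, add_comm]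
    rfl

lemma arityOK_of_mem_children {P q : Prog} (hP : arityOK P) (hq : q ∈ P.children) :
    arityOK q := by
  cases P with
  | ite v a b t =>
    simp only [arityOK] at hP
    by_cases h : lexLe (code a) (code b) <;> simp [children, h] at hq <;>
      rcases hq with rfl | rfl | rfl <;> tauto
  | pcase v bs t =>
    simp only [arityOK, List.mem_attach, true_implies, Subtype.forall] at hP
    simp only [children, List.mem_append, List.mem_singleton] at hq
    rcases hq with hq | rfl
    exacts [hP.2.1 q ((List.mergeSort_perm _ _).subset hq), hP.2.2]
  | _ => simp [arityOK, children] at hP hq <;> rcases hq with rfl | rfl <;> tauto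

lemma length_children_eq_of_header_eq {P Q : Prog} (hP : arityOK P) (hQ : arityOK Q)
    (h : P.header = Q.header) : P.children.length = Q.children.length := by
  cases P <;> cases Q <;> simp [header, arityOK] at h hP hQ
  all_goals first
    | simp only [children]; split_ifs <;> rfl
    | simp_all [children, sortBranches, List.length_mergeSort]

def HeadIsOne (s : List ℕ) : Prop := ∀ a ∈ s.head?, a = 1

lemma headIsOne_nil : HeadIsOne [] := by
  simp [HeadIsOne]

lemma headIsOne_code_append (P : Prog) (s : List ℕ) : HeadIsOne (code P ++ s) := by
  cases P <;> simp [HeadIsOne, code]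

lemma headIsOne_flatMap_code_append (qs : List Prog) {s : List ℕ} (hs : HeadIsOne s) :
    HeadIsOne (qs.flatMap code ++ s) := by
  cases qs with
  | nil => simpa using hs
  | cons q qs => simpa using headIsOne_code_append q _

lemma header_append_inj {P Q : Prog} {s s' : List ℕ} (hs : HeadIsOne s) (hs' : HeadIsOne s')
    (h : P.header ++ s = Q.header ++ s') : P.header = Q.header ∧ s = s' := by
  have shape : ∀ R : Prog, R.header = [1] ∨ ∃ k, 2 ≤ k ∧ R.header = [1, k] := by
    intro R; cases R <;> simp [header]
  rcases shape P with hP | ⟨k, hk, hP⟩ <;> rcases shape Q with hQ | ⟨k', hk', hQ⟩ <;>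
    rw [hP, hQ] at h ⊢ <;> simp only [List.cons_append, List.nil_append, List.cons.injEq] at h
  · exact ⟨rfl, h.2⟩
  · have := hs k' (by simp [h.2]); omega
  · have := hs' k (by simp [← h.2]); omega
  · exact ⟨by rw [h.2.1], h.2.2⟩

lemma flatMap_code_append_inj {qs qs' : List Prog}
    (hdec : ∀ q ∈ qs, ∀ Q, arityOK Q → ∀ s s', HeadIsOne s → HeadIsOne s' →
      code q ++ s = code Q ++ s' → code q = code Q)
    (hqs' : ∀ q ∈ qs', arityOK q) (hlen : qs.length = qs'.length) {s s' : List ℕ}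
    (hs : HeadIsOne s) (hs' : HeadIsOne s') (h : qs.flatMap code ++ s = qs'.flatMap code ++ s') :
    List.Forall₂ (fun q q' => code q = code q') qs qs' ∧ s = s' := by
  induction qs generalizing qs' with
  | nil => cases qs' <;> simp_all
  | cons q qs ih =>
    obtain _ | ⟨q', qs'⟩ := qs'
    · simp at hlen
    simp only [List.flatMap_cons, List.append_assoc] at h
    have hq : code q = code q' := hdec q (by simp) q' (hqs' q' (by simp)) _ _
      (headIsOne_flatMap_code_append _ hs) (headIsOne_flatMap_code_append _ hs') h
    rw [hq, List.append_cancel_left_eq] at h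
    obtain ⟨hrest, hss⟩ := ih (fun r hr => hdec r (by simp [hr]))
      (fun r hr => hqs' r (by simp [hr])) (by simpa using hlen) h
    exact ⟨.cons hq hrest, hss⟩

/-- Codes are not prefix-free: `[1]` is a prefix of every code. -/
theorem code_append_inj {P Q : Prog} (hP : arityOK P) (hQ : arityOK Q) {s s' : List ℕ}
    (hs : HeadIsOne s) (hs' : HeadIsOne s') (h : code P ++ s = code Q ++ s') :
    code P = code Q := by
  induction P using children_induction generalizing Q s s' with
  | ih P ih =>
    have h' := h
    rw [code_eq_header_append P, code_eq_header_append Q, List.append_assoc,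
      List.append_assoc] at h'
    obtain ⟨hhead, hrest⟩ := header_append_inj (headIsOne_flatMap_code_append _ hs)
      (headIsOne_flatMap_code_append _ hs') h'
    obtain ⟨-, rfl⟩ := flatMap_code_append_inj
      (fun q hq _ hQ' _ _ => ih q hq (arityOK_of_mem_children hP hq) hQ')
      (fun _ => arityOK_of_mem_children hQ)
      (length_children_eq_of_header_eq hP hQ hhead) hs hs' hrest
    exact List.append_cancel_right h

theorem header_eq_and_children_codes_of_code_eq {P Q : Prog} (hP : arityOK P) (hQ : arityOK Q)
    (h : code P = code Q) :
    P.header = Q.header ∧ List.Forall₂ (fun q q' => code q = code q') P.children Q.children := by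
  rw [code_eq_header_append, code_eq_header_append, ← List.append_nil (List.flatMap _ _),
    ← List.append_nil (List.flatMap code Q.children)] at h
  obtain ⟨hhead, hrest⟩ := header_append_inj (headIsOne_flatMap_code_append _ headIsOne_nil)
    (headIsOne_flatMap_code_append _ headIsOne_nil) h
  refine ⟨hhead, (flatMap_code_append_inj ?_ (fun _ => arityOK_of_mem_children hQ)
    (length_children_eq_of_header_eq hP hQ hhead) headIsOne_nil headIsOne_nil hrest).1⟩
  exact fun q hq Q' hQ' _ _ hs hs' => code_append_inj (arityOK_of_mem_children hP hq) hQ' hs hs'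

def SSG.map (G : SSG) (f : ℕ → ℕ) : SSG :=
  ⟨G.verts.image f, G.edges.image (Prod.map f f), f G.src, f G.snk⟩

lemma graphOf_ite_comm (v : ℕ) (a b t : Prog) :
    graphOf (.ite v a b t) = graphOf (.ite v b a t) := by
  simp only [graphOf, SSG.mk.injEq, and_true]
  constructor <;> ext <;> simp <;> tauto

lemma exists_graphOf_ite_eq_children (v : ℕ) (a b t : Prog) :
    ∃ x y, (Prog.ite v a b t).children = [x, y, t] ∧
      graphOf (.ite v a b t) = graphOf (.ite v x y t) := by
  by_cases h : lexLe (code a) (code b)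
  · exact ⟨a, b, by simp [children, h], rfl⟩
  · exact ⟨b, a, by simp [children, h], graphOf_ite_comm v a b t⟩

lemma graphOf_pcase_nil (v : ℕ) (t : Prog) :
    graphOf (.pcase v [] t) =
      ⟨insert v (graphOf t).verts, (graphOf t).edges, v, (graphOf t).snk⟩ := by
  simp [graphOf]

lemma graphOf_pcase_cons (v : ℕ) (q : Prog) (qs : List Prog) (t : Prog) :
    graphOf (.pcase v (q :: qs) t) =
      ⟨(graphOf q).verts ∪ (graphOf (.pcase v qs t)).verts,
        insert (v, (graphOf q).src) (insert ((graphOf q).snk, (graphOf t).src) (graphOf q).edges) ∪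
          (graphOf (.pcase v qs t)).edges,
        v, (graphOf t).snk⟩ := by
  rw [graphOf, graphOf]
  simp only [List.attach_cons, List.map_cons, List.map_map, List.foldr_cons, SSG.mk.injEq,
    and_true]
  constructor <;> ext <;> simp

lemma graphOf_pcase_perm {bs bs' : List Prog} (v : ℕ) (t : Prog) (h : bs.Perm bs') :
    graphOf (.pcase v bs t) = graphOf (.pcase v bs' t) := by
  induction h with
  | nil => rfl
  | cons q _ ih => rw [graphOf_pcase_cons, graphOf_pcase_cons, ih]
  | swap q r qs =>
    simp only [graphOf_pcase_cons, SSG.mk.injEq, and_true]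
    exact ⟨Finset.union_left_comm _ _ _, Finset.union_left_comm _ _ _⟩
  | trans _ _ ih₁ ih₂ => exact ih₁.trans ih₂

lemma graphOf_pcase_sortBranches (v : ℕ) (bs : List Prog) (t : Prog) :
    graphOf (.pcase v bs t) = graphOf (.pcase v (sortBranches bs) t) :=
  graphOf_pcase_perm v t (List.mergeSort_perm _ _).symm

lemma graphOf_pcase_eq_map {f : ℕ → ℕ} {v v' : ℕ} {qs qs' : List Prog} {t t' : Prog}
    (hv : f v = v') (ht : graphOf t' = (graphOf t).map f)
    (hqs : List.Forall₂ (fun q q' => graphOf q' = (graphOf q).map f) qs qs') :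
    graphOf (.pcase v' qs' t') = (graphOf (.pcase v qs t)).map f := by
  induction hqs with
  | nil => simp [graphOf_pcase_nil, ht, SSG.map, hv]
  | cons hq _ ih =>
    rw [graphOf_pcase_cons, graphOf_pcase_cons, ih, hq, ht]
    simp [SSG.map, hv, Finset.image_union, Finset.image_insert]

theorem graphOf_eq_map_of_children {f : ℕ → ℕ} {P P' : Prog} (hP : arityOK P)
    (hP' : arityOK P') (hhead : P.header = P'.header) (hroot : f P.root = P'.root)
    (hch : List.Forall₂ (fun q q' => graphOf q' = (graphOf q).map f) P.children P'.children) :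
    graphOf P' = (graphOf P).map f := by
  cases P <;> cases P' <;> simp [header, arityOK] at hhead hP hP' <;> try omega
  case ite.ite v a b t v' a' b' t' =>
    obtain ⟨x, y, hxy, hg⟩ := exists_graphOf_ite_eq_children v a b t
    obtain ⟨x', y', hxy', hg'⟩ := exists_graphOf_ite_eq_children v' a' b' t'
    simp only [hxy, hxy', List.forall₂_cons, List.Forall₂.nil, and_true] at hch
    rw [hg, hg', graphOf, graphOf, hch.1, hch.2.1, hch.2.2]
    simp_all [root, SSG.map, Finset.image_insert, Finset.image_union]
  case pcase.pcase v bs t v' bs' t' =>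
    obtain ⟨hqs, ht⟩ := List.forall₂_append_singleton_iff.1 hch
    rw [graphOf_pcase_sortBranches v bs, graphOf_pcase_sortBranches v' bs']
    exact graphOf_pcase_eq_map hroot ht hqs
  all_goals
    simp_all [children, root, graphOf, trivG, SSG.map, Finset.image_insert, Finset.image_union]

theorem graphOf_eq_map_of_code_eq {P P' : Prog} (hP : arityOK P) (hP' : arityOK P')
    (hc : code P = code P') {f : ℕ → ℕ} (hf : (vlist P).map f = vlist P') :
    graphOf P' = (graphOf P).map f := by
  induction P using children_induction generalizing P' with
  | ih P ih =>
    obtain ⟨hhead, hcodes⟩ := header_eq_and_children_codes_of_code_eq hP hP' hc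
    rw [vlist_eq_root_cons, vlist_eq_root_cons, List.map_cons, List.cons.injEq] at hf
    have hvlists := List.forall₂_map_eq_of_flatMap
      (hcodes.imp fun q q' h => by rw [length_vlist_eq_count_code, h, length_vlist_eq_count_code])
      hf.2
    refine graphOf_eq_map_of_children hP hP' hhead hf.1 ?_
    rw [List.forall₂_iff_zip] at hcodes hvlists ⊢
    refine ⟨hcodes.1, fun {q q'} hqq' => ?_⟩
    have hq := List.of_mem_zip hqq'
    exact ih q hq.1 (arityOK_of_mem_children hP hq.1) (arityOK_of_mem_children hP' hq.2)
      (hcodes.2 hqq') (hvlists.2 hqq')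

lemma mem_verts_graphOf_pcase {x v : ℕ} {qs : List Prog} {t : Prog} :
    x ∈ (graphOf (.pcase v qs t)).verts ↔
      x = v ∨ ∃ q ∈ qs ++ [t], x ∈ (graphOf q).verts := by
  induction qs with
  | nil => simp [graphOf_pcase_nil]
  | cons q qs ih => rw [graphOf_pcase_cons, Finset.mem_union, ih]; simp [or_left_comm]

lemma mem_verts_graphOf {x : ℕ} {P : Prog} :
    x ∈ (graphOf P).verts ↔ x = P.root ∨ ∃ q ∈ P.children, x ∈ (graphOf q).verts := by
  cases P with
  | ite v a b t =>
    by_cases h : lexLe (code a) (code b) <;> simp [graphOf, root, children, h, or_left_comm]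
  | pcase v bs t =>
    rw [graphOf_pcase_sortBranches, mem_verts_graphOf_pcase]; rfl
  | _ => simp [graphOf, root, children, trivG]

lemma verts_graphOf (P : Prog) : (graphOf P).verts = (vlist P).toFinset := by
  induction P using children_induction with
  | ih P ih =>
    ext x
    rw [mem_verts_graphOf, vlist_eq_root_cons, List.mem_toFinset, List.mem_cons, List.mem_flatMap]
    exact or_congr_right <| exists_congr fun q => and_congr_right fun hq => by
      rw [ih q hq, List.mem_toFinset]

def posMap (l l' : List ℕ) (x : ℕ) : ℕ := l'.getD (l.idxOf x) 0

lemma map_posMap {l l' : List ℕ} (hl : l.Nodup) (hlen : l.length = l'.length) :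
    l.map (posMap l l') = l' := by
  refine List.ext_getElem (by simp [hlen]) fun i _ hi => ?_
  simp [posMap, hl.idxOf_getElem, List.getElem?_eq_getElem hi]

lemma posMap_posMap {l l' : List ℕ} (hl' : l'.Nodup) (hlen : l.length = l'.length) {x : ℕ}
    (hx : x ∈ l) : posMap l' l (posMap l l' x) = x := by
  have hi : l.idxOf x < l'.length := hlen ▸ List.idxOf_lt_length_iff.2 hx
  unfold posMap
  rw [List.getD_eq_getElem _ _ hi, hl'.idxOf_getElem,
    List.getD_eq_getElem _ _ (List.idxOf_lt_length_iff.2 hx), List.getElem_idxOf]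

theorem isIsoFun_of_map {f g : ℕ → ℕ} {G G' : SSG} (hG' : G' = G.map f)
    (hG : G = G'.map g) (hgf : Set.LeftInvOn g f G.verts) : IsIsoFun f G G' := by
  subst hG'
  refine ⟨by simpa [SSG.map] using hgf.injOn.bijOn_image, fun a ha b hb => ⟨fun h => ?_, ?_⟩⟩
  · exact Finset.mem_image_of_mem (Prod.map f f) h
  · intro h
    have : (g (f a), g (f b)) ∈ ((G.map f).map g).edges :=
      Finset.mem_image_of_mem (Prod.map g g) h
    rwa [hgf ha, hgf hb, ← hG] at this

/-- If C(G) = C(G'), the map sending the vertex of the i-th 1 of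
C(G) to the vertex of the i-th 1 of C(G') is a graph isomorphism. -/
theorem code_eq_gives_iso (P P' : Prog) (hP : WF P) (hP' : WF P')
    (hc : code P = code P') :
    IsIsoFun (fun v => (vlist P').getD ((vlist P).idxOf v) 0)
        (graphOf P) (graphOf P') ∧
      (vlist P').getD ((vlist P).idxOf (graphOf P).src) 0 = (graphOf P').src := by
  have hlen : (vlist P).length = (vlist P').length := by
    rw [length_vlist_eq_count_code, hc, length_vlist_eq_count_code]
  have hG' := graphOf_eq_map_of_code_eq hP.2 hP'.2 hc (map_posMap hP.1 hlen)
  have hG := graphOf_eq_map_of_code_eq hP'.2 hP.2 hc.symm (map_posMap hP'.1 hlen.symm)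
  refine ⟨isIsoFun_of_map hG' hG fun x hx => ?_, by rw [hG']; rfl⟩
  rw [Finset.mem_coe, verts_graphOf, List.mem_toFinset] at hx
  exact posMap_posMap hP'.1 hlen hx

end DJ
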